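/- Let h : ℝ → ℝ be infinitely differentiable and fix x ∈ ℝ. For Δx > 0 let u_{Δx} denote the sliding double cell average of h with spacing Δx, i.e. u_{Δx}(y) = (1/Δx²) ∫_{y−Δx/2}^{y+Δx/2} ( ∫_{η−Δx/2}^{η+Δx/2} h(ξ) dξ ) dη. Then the function of Δx given by [ −(1/90) u_{Δx}(x−2Δx) + (5/36) u_{Δx}(x−Δx) − (49/36) u_{Δx}(x) + (49/36) u_{Δx}(x+Δx) − (5/36) u_{Δx}(x+2Δx) + (1/90) u_{Δx}(x+3Δx) ] − ( h(x+Δx) − h(x) ) − (1/560) h⁽⁷⁾(x) Δx⁷ is O(Δx⁸) as Δx → 0⁺. -/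
import Mathlib


open Asymptotics

set_option maxHeartbeats 2000000

/-- Taylor polynomial helper. -/
noncomputable def tpoly (f : ℝ → ℝ) (x : ℝ) (n : ℕ) (c t : ℝ) : ℝ :=
  ∑ k ∈ Finset.range (n + 1), (k.factorial : ℝ)⁻¹ * (c * t) ^ k * iteratedDeriv k f x

lemma iteratedDerivWithin_Icc_eq {f : ℝ → ℝ} (hf : ContDiff ℝ (⊤ : ℕ∞) f) (k : ℕ) :
    iteratedDerivWithin k f (Set.Icc (0:ℝ) 1) 0 = iteratedDeriv k f 0 := by
  rw [iteratedDerivWithin_eq_iteratedFDerivWithin, iteratedDeriv_eq_iteratedFDeriv]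
  have hk : ContDiff ℝ (k : ℕ∞) f := hf.of_le (by exact_mod_cast le_top)
  have := ((contDiff_iff_ftaylorSeries.mp hk).hasFTaylorSeriesUpToOn
      (Set.Icc (0:ℝ) 1)).eq_iteratedFDerivWithin_of_uniqueDiffOn le_rfl
      (uniqueDiffOn_Icc one_pos) (Set.mem_Icc.mpr ⟨le_rfl, zero_le_one⟩)
  rw [← this]
  rfl

lemma taylor_right_bigO {f : ℝ → ℝ} (hf : ContDiff ℝ (⊤ : ℕ∞) f) (n : ℕ) :
    (fun t : ℝ => f t - ∑ k ∈ Finset.range (n + 1),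
        (k.factorial : ℝ)⁻¹ * t ^ k * iteratedDeriv k f 0)
      =O[nhdsWithin 0 (Set.Ioi 0)] fun t : ℝ => t ^ (n + 1) := by
  have hfn : ContDiffOn ℝ (n + 1 : ℕ) f (Set.Icc 0 1) :=
    (hf.of_le (by exact_mod_cast le_top)).contDiffOn
  obtain ⟨C, hC⟩ := exists_taylor_mean_remainder_bound zero_le_one hfn
  rw [isBigO_iff]
  refine ⟨C, ?_⟩
  filter_upwards [Ioc_mem_nhdsGT zero_lt_one] with t ht
  have h1 := hC t ⟨ht.1.le, ht.2⟩
  rw [taylor_within_apply] at h1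
  have h2 : ∀ k ∈ Finset.range (n + 1),
      ((k.factorial : ℝ)⁻¹ * (t - 0) ^ k) • iteratedDerivWithin k f (Set.Icc (0:ℝ) 1) 0
        = (k.factorial : ℝ)⁻¹ * t ^ k * iteratedDeriv k f 0 := by
    intro k _
    rw [iteratedDerivWithin_Icc_eq hf k, sub_zero, smul_eq_mul]
  rw [Finset.sum_congr rfl h2] at h1
  calc ‖f t - ∑ k ∈ Finset.range (n + 1),
        (k.factorial : ℝ)⁻¹ * t ^ k * iteratedDeriv k f 0‖
      ≤ C * (t - 0) ^ (n + 1) := h1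
    _ = C * ‖t ^ (n + 1)‖ := by
        rw [sub_zero, Real.norm_eq_abs, abs_of_nonneg (pow_nonneg ht.1.le _)]

lemma iteratedDeriv_affine {f : ℝ → ℝ} (hf : ContDiff ℝ (⊤ : ℕ∞) f) (x c : ℝ) (k : ℕ) :
    iteratedDeriv k (fun t : ℝ => f (x + c * t)) 0 = c ^ k * iteratedDeriv k f x := by
  have hshift : ContDiff ℝ (k : ℕ) (fun z : ℝ => f (x + z)) :=
    (hf.of_le (by exact_mod_cast le_top)).comp (contDiff_const.add contDiff_id)
  have h1 : (fun t : ℝ => f (x + c * t)) = fun t : ℝ => (fun z : ℝ => f (x + z)) (c * t) := rfl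
  rw [h1, congrFun (iteratedDeriv_comp_const_mul hshift c) 0,
    congrFun (iteratedDeriv_comp_const_add k f x) (c * 0)]
  norm_num

lemma taylor_comp_bigO {f : ℝ → ℝ} (hf : ContDiff ℝ (⊤ : ℕ∞) f) (x c : ℝ) (n : ℕ) :
    (fun t : ℝ => f (x + c * t) - tpoly f x n c t)
      =O[nhdsWithin 0 (Set.Ioi 0)] fun t : ℝ => t ^ (n + 1) := by
  have hg : ContDiff ℝ (⊤ : ℕ∞) (fun t : ℝ => f (x + c * t)) :=
    hf.comp (contDiff_const.add (contDiff_const.mul contDiff_id))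
  refine (taylor_right_bigO hg n).congr (fun t => ?_) (fun t => rfl)
  rw [tpoly]
  congr 1
  refine Finset.sum_congr rfl fun k _ => ?_
  rw [iteratedDeriv_affine hf x c k, mul_pow]
  ring

lemma bigO_div_sq {R : ℝ → ℝ} {n : ℕ}
    (hR : R =O[nhdsWithin 0 (Set.Ioi 0)] fun t : ℝ => t ^ (n + 2)) :
    (fun t : ℝ => (1 / t ^ 2) * R t) =O[nhdsWithin 0 (Set.Ioi 0)] fun t : ℝ => t ^ n := by
  obtain ⟨C, hC⟩ := hR.bound
  rw [isBigO_iff]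
  refine ⟨C, ?_⟩
  filter_upwards [hC, self_mem_nhdsWithin] with t h1 h2
  have ht : (0:ℝ) < t := h2
  have ht' : t ≠ 0 := ne_of_gt ht
  rw [norm_mul]
  have e1 : ‖(1 / t ^ 2 : ℝ)‖ = 1 / t ^ 2 := by
    rw [Real.norm_eq_abs, abs_of_pos (by positivity)]
  rw [e1]
  calc 1 / t ^ 2 * ‖R t‖ ≤ 1 / t ^ 2 * (C * ‖t ^ (n + 2)‖) := by
        apply mul_le_mul_of_nonneg_left h1 (by positivity)
    _ = C * ‖t ^ n‖ := by
        rw [Real.norm_eq_abs, Real.norm_eq_abs, abs_of_pos (by positivity),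
          abs_of_pos (by positivity)]
        field_simp
        ring

/-- The sliding double cell average of h with spacing Δx. -/
noncomputable def slidingAvg (h : ℝ → ℝ) (Δx y : ℝ) : ℝ :=
  (1 / Δx ^ 2) * ∫ η in (y - Δx / 2)..(y + Δx / 2),
    ∫ ξ in (η - Δx / 2)..(η + Δx / 2), h ξ

/-- The six-point finite difference flux built from sliding double cell averages of a smooth
function h approximates h(x+Δx) − h(x) with leading error (1/560) h⁽⁷⁾(x) Δx⁷ and remainder
O(Δx⁸) as Δx → 0⁺. -/
theorem weno_flux_expansion (h : ℝ → ℝ) (hh : ContDiff ℝ (⊤ : ℕ∞) h) (x : ℝ) :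
    (fun Δx : ℝ =>
      (-(1 / 90) * slidingAvg h Δx (x - 2 * Δx) + (5 / 36) * slidingAvg h Δx (x - Δx)
        - (49 / 36) * slidingAvg h Δx x + (49 / 36) * slidingAvg h Δx (x + Δx)
        - (5 / 36) * slidingAvg h Δx (x + 2 * Δx) + (1 / 90) * slidingAvg h Δx (x + 3 * Δx))
      - (h (x + Δx) - h x) - (1 / 560) * iteratedDeriv 7 h x * Δx ^ 7)
      =O[nhdsWithin 0 (Set.Ioi 0)] fun Δx : ℝ => Δx ^ 8 := by
  have hh' : ContDiff ℝ (⊤ : ℕ∞) h := hh.of_le (by simp)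
  set H : ℝ → ℝ := fun y => ∫ t in (0:ℝ)..y, h t with hHdef
  have hHd : ∀ y, HasDerivAt H (h y) y := fun y =>
    (hh'.continuous.integral_hasStrictDerivAt 0 y).hasDerivAt
  have hHc : Continuous H := Differentiable.continuous (fun y => (hHd y).differentiableAt)
  set G : ℝ → ℝ := fun y => ∫ t in (0:ℝ)..y, H t with hGdef
  have hGd' : ∀ y, HasDerivAt G (H y) y := fun y =>
    (hHc.integral_hasStrictDerivAt 0 y).hasDerivAt
  have hdG : deriv G = H := funext fun y => (hGd' y).deriv
  have hdH : deriv H = h := funext fun y => (hHd y).deriv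
  have hHsm : ContDiff ℝ (⊤ : ℕ∞) H := by
    rw [contDiff_infty_iff_deriv, hdH]
    exact ⟨fun y => (hHd y).differentiableAt, hh'⟩
  have hGsm : ContDiff ℝ (⊤ : ℕ∞) G := by
    rw [contDiff_infty_iff_deriv, hdG]
    exact ⟨fun y => (hGd' y).differentiableAt, hHsm⟩
  -- FTC identities
  have hint : ∀ a b : ℝ, (∫ t in a..b, h t) = H b - H a := fun a b =>
    (intervalIntegral.integral_interval_sub_left (hh'.continuous.intervalIntegrable 0 b)
      (hh'.continuous.intervalIntegrable 0 a)).symm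
  have hintH : ∀ a b : ℝ, (∫ t in a..b, H t) = G b - G a := fun a b =>
    (intervalIntegral.integral_interval_sub_left (hHc.intervalIntegrable 0 b)
      (hHc.intervalIntegrable 0 a)).symm
  -- sliding average formula
  have hslide : ∀ (Δ y : ℝ), slidingAvg h Δ y
      = (1 / Δ ^ 2) * (G (y + Δ) - 2 * G y + G (y - Δ)) := by
    intro Δ y
    unfold slidingAvg
    congr 1
    rw [intervalIntegral.integral_congr (g := fun η => H (η + Δ / 2) - H (η - Δ / 2))
      (fun η _ => hint _ _)]
    have i1 : IntervalIntegrable (fun η : ℝ => H (η + Δ / 2)) MeasureTheory.volume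
        (y - Δ / 2) (y + Δ / 2) := Continuous.intervalIntegrable (by fun_prop) _ _
    have i2 : IntervalIntegrable (fun η : ℝ => H (η - Δ / 2)) MeasureTheory.volume
        (y - Δ / 2) (y + Δ / 2) := Continuous.intervalIntegrable (by fun_prop) _ _
    rw [intervalIntegral.integral_sub i1 i2]
    rw [intervalIntegral.integral_comp_add_right (fun z => H z) (Δ / 2),
      intervalIntegral.integral_comp_sub_right (fun z => H z) (Δ / 2), hintH, hintH]
    rw [show y - Δ / 2 + Δ / 2 = y by ring, show y + Δ / 2 + Δ / 2 = y + Δ by ring,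
      show y - Δ / 2 - Δ / 2 = y - Δ by ring, show y + Δ / 2 - Δ / 2 = y by ring]
    ring
  -- iterated derivatives of G vs h
  have hGh : ∀ k : ℕ, iteratedDeriv (k + 2) G x = iteratedDeriv k h x := by
    intro k
    have s1 : iteratedDeriv (k + 2) G x = iteratedDeriv (k + 1) (deriv G) x :=
      congrFun (iteratedDeriv_succ' (n := k + 1)) x
    rw [s1, hdG, congrFun (iteratedDeriv_succ' (n := k)) x, hdH]
  -- remainders
  have hRm : ∀ c : ℝ, (fun t : ℝ => G (x + c * t) - tpoly G x 9 c t)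
      =O[nhdsWithin 0 (Set.Ioi 0)] fun t : ℝ => t ^ 10 := fun c => taylor_comp_bigO hGsm x c 9
  have hRh : (fun t : ℝ => h (x + 1 * t) - tpoly h x 7 1 t)
      =O[nhdsWithin 0 (Set.Ioi 0)] fun t : ℝ => t ^ 8 := taylor_comp_bigO hh' x 1 7
  have hcomb : (fun t : ℝ => (1 / t ^ 2) *
        ((-1/90) * (G (x + (-3) * t) - tpoly G x 9 (-3) t)
        + (29/180) * (G (x + (-2) * t) - tpoly G x 9 (-2) t)
        + (-33/20) * (G (x + (-1) * t) - tpoly G x 9 (-1) t)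
        + (38/9) * (G (x + 0 * t) - tpoly G x 9 0 t)
        + (-38/9) * (G (x + 1 * t) - tpoly G x 9 1 t)
        + (33/20) * (G (x + 2 * t) - tpoly G x 9 2 t)
        + (-29/180) * (G (x + 3 * t) - tpoly G x 9 3 t)
        + (1/90) * (G (x + 4 * t) - tpoly G x 9 4 t))
      - (h (x + 1 * t) - tpoly h x 7 1 t))
      =O[nhdsWithin 0 (Set.Ioi 0)] fun t : ℝ => t ^ 8 := by
    refine IsBigO.sub ?_ hRh
    refine bigO_div_sq (n := 8) ?_
    exact (((((((((hRm (-3)).const_mul_left (-1/90)).add ((hRm (-2)).const_mul_left (29/180))).add ((hRm (-1)).const_mul_left (-33/20))).add ((hRm 0).const_mul_left (38/9))).add ((hRm 1).const_mul_left (-38/9))).add ((hRm 2).const_mul_left (33/20))).add ((hRm 3).const_mul_left (-29/180))).add ((hRm 4).const_mul_left (1/90)))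
  refine hcomb.congr' (Filter.eventuallyEq_of_mem self_mem_nhdsWithin fun t ht => ?_)
    Filter.EventuallyEq.rfl
  have ht0 : (0:ℝ) < t := ht
  have htne : t ≠ 0 := ne_of_gt ht0
  simp only [hslide, tpoly, Finset.sum_range_succ, Finset.sum_range_zero, iteratedDeriv_zero]
  rw [show iteratedDeriv 2 G x = h x from by simpa using hGh 0,
    show iteratedDeriv 3 G x = iteratedDeriv 1 h x from by simpa using hGh 1,
    show iteratedDeriv 4 G x = iteratedDeriv 2 h x from by simpa using hGh 2,
    show iteratedDeriv 5 G x = iteratedDeriv 3 h x from by simpa using hGh 3,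
    show iteratedDeriv 6 G x = iteratedDeriv 4 h x from by simpa using hGh 4,
    show iteratedDeriv 7 G x = iteratedDeriv 5 h x from by simpa using hGh 5,
    show iteratedDeriv 8 G x = iteratedDeriv 6 h x from by simpa using hGh 6,
    show iteratedDeriv 9 G x = iteratedDeriv 7 h x from by simpa using hGh 7]
  rw [show x - 2 * t + t = x - t by ring, show x - 2 * t - t = x - 3 * t by ring,
    show x - t + t = x by ring, show x - t - t = x - 2 * t by ring,
    show x + t + t = x + 2 * t by ring, show x + t - t = x by ring,
    show x + 2 * t + t = x + 3 * t by ring, show x + 2 * t - t = x + t by ring,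
    show x + 3 * t + t = x + 4 * t by ring, show x + 3 * t - t = x + 2 * t by ring,
    show x + -3 * t = x - 3 * t by ring, show x + -2 * t = x - 2 * t by ring,
    show x + -1 * t = x - t by ring, show x + 0 * t = x by ring,
    show x + 1 * t = x + t by ring, show x + 2 * t = x + 2 * t by ring,
    show x + 3 * t = x + 3 * t by ring, show x + 4 * t = x + 4 * t by ring]
  norm_num [Nat.factorial]
  field_simp
  ring
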